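/- Let k be a field, q ∈ k, and A = k⟨x,y⟩/(x², xy + q·yx, y²). Then A is a 4-dimensional k-vector space with basis {1, y, x, yx}. -/

import Mathlib

/-!
The span of `1, y, x, yx` contains `1` and is stable under left multiplication by the generators
(`x·y = -q·yx`, and every other product of two generators with a basis word is `0` or again a
basis word), so it is all of `A_q`. These four words are linearly independent because the left
regular representation can be written down in advance as a pair of `4 × 4` matrices satisfying
the relations, and it sends `1, y, x, yx` to matrices whose first columns are the standard basis.
-/

open scoped TensorProduct

/-- The relations `x² = 0`, `xy + q·yx = 0`, `y² = 0` on the free algebra `k⟨x,y⟩`. -/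
inductive PathologicalRel (k : Type) [Field k] (q : k) :
    FreeAlgebra k (Fin 2) → FreeAlgebra k (Fin 2) → Prop
  | xx : PathologicalRel k q (FreeAlgebra.ι k 0 * FreeAlgebra.ι k 0) 0
  | xyqyx : PathologicalRel k q
      (FreeAlgebra.ι k 0 * FreeAlgebra.ι k 1 + q • (FreeAlgebra.ι k 1 * FreeAlgebra.ι k 0)) 0
  | yy : PathologicalRel k q (FreeAlgebra.ι k 1 * FreeAlgebra.ι k 1) 0

/-- The algebra `A_q = k⟨x,y⟩/(x², xy + q·yx, y²)`. -/
abbrev PathologicalAlgebra (k : Type) [Field k] (q : k) := RingQuot (PathologicalRel k q)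

theorem Submodule.eq_top_of_one_mem_of_mul_mem {R A : Type*} [CommSemiring R] [Semiring A]
    [Algebra R A] {s : Set A} (hs : Algebra.adjoin R s = ⊤) (S : Submodule R A) (h1 : 1 ∈ S)
    (hmul : ∀ a ∈ s, ∀ m ∈ S, a * m ∈ S) : S = ⊤ := by
  refine eq_top_iff.2 ?_
  rintro a -
  suffices ∀ m ∈ S, a * m ∈ S by simpa using this 1 h1
  have ha : a ∈ Algebra.adjoin R s := hs ▸ Algebra.mem_top
  induction ha using Algebra.adjoin_induction with
  | mem a ha => exact hmul a ha
  | algebraMap r => intro m hm; simpa [← Algebra.smul_def] using S.smul_mem r hm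
  | add a b _ _ iha ihb => intro m hm; simpa [add_mul] using S.add_mem (iha m hm) (ihb m hm)
  | mul a b _ _ iha ihb => intro m hm; simpa [mul_assoc] using iha _ (ihb m hm)

namespace PathologicalAlgebra

variable (k : Type) [Field k] (q : k)

noncomputable def x : PathologicalAlgebra k q :=
  RingQuot.mkAlgHom k (PathologicalRel k q) (FreeAlgebra.ι k 0)

noncomputable def y : PathologicalAlgebra k q :=
  RingQuot.mkAlgHom k (PathologicalRel k q) (FreeAlgebra.ι k 1)

theorem x_mul_x : x k q * x k q = 0 := by
  simpa [x] using RingQuot.mkAlgHom_rel k (PathologicalRel.xx (k := k) (q := q))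

theorem y_mul_y : y k q * y k q = 0 := by
  simpa [y] using RingQuot.mkAlgHom_rel k (PathologicalRel.yy (k := k) (q := q))

theorem x_mul_y : x k q * y k q = -q • (y k q * x k q) := by
  have h := RingQuot.mkAlgHom_rel k (PathologicalRel.xyqyx (k := k) (q := q))
  simp only [map_add, map_mul, map_smul, map_zero] at h
  rw [x, y]
  linear_combination (norm := module) h

theorem adjoin_x_y : Algebra.adjoin k {x k q, y k q} = ⊤ := by
  have hrange : Set.range (RingQuot.mkAlgHom k (PathologicalRel k q) ∘ FreeAlgebra.ι k) =
      {x k q, y k q} := by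
    ext
    simp [Fin.exists_fin_two, x, y, eq_comm]
  rw [← hrange, Set.range_comp, Algebra.adjoin_image, FreeAlgebra.adjoin_range_ι,
    Algebra.map_top, AlgHom.range_eq_top]
  exact RingQuot.mkAlgHom_surjective k _

theorem x_mul_y_mul_x : x k q * (y k q * x k q) = 0 := by
  rw [← mul_assoc, x_mul_y, smul_mul_assoc, mul_assoc, x_mul_x, mul_zero, smul_zero]

theorem y_mul_y_mul_x : y k q * (y k q * x k q) = 0 := by
  rw [← mul_assoc, y_mul_y, zero_mul]

noncomputable def basisWords : Fin 4 → PathologicalAlgebra k q :=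
  ![1, y k q, x k q, y k q * x k q]

theorem span_basisWords : Submodule.span k (Set.range (basisWords k q)) = ⊤ := by
  set S := Submodule.span k (Set.range (basisWords k q))
  have hword : ∀ i, basisWords k q i ∈ S := fun i => Submodule.subset_span ⟨i, rfl⟩
  refine S.eq_top_of_one_mem_of_mul_mem (adjoin_x_y k q) (hword 0) ?_
  rintro a ha m hm
  suffices S ≤ S.comap (LinearMap.mulLeft k a) from this hm
  rw [Submodule.span_le, Set.range_subset_iff]
  intro i
  rcases ha with rfl | rfl <;> fin_cases i
  all_goals
    simp only [basisWords, Fin.reduceFinMk, Matrix.cons_val, SetLike.mem_coe, Submodule.mem_comap,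
      LinearMap.mulLeft_apply, mul_one, x_mul_x, x_mul_y, y_mul_y, x_mul_y_mul_x, y_mul_y_mul_x,
      zero_mem]
  exacts [hword 2, S.smul_mem _ (hword 3), hword 1, hword 3]

-- The matrices of left multiplication by `x` and by `y` in the basis `1, y, x, yx`.
def matX : Matrix (Fin 4) (Fin 4) k := !![0, 0, 0, 0; 0, 0, 0, 0; 1, 0, 0, 0; 0, -q, 0, 0]

def matY : Matrix (Fin 4) (Fin 4) k := !![0, 0, 0, 0; 1, 0, 0, 0; 0, 0, 0, 0; 0, 0, 1, 0]

noncomputable def leftRegular : PathologicalAlgebra k q →ₐ[k] Matrix (Fin 4) (Fin 4) k :=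
  RingQuot.liftAlgHom k ⟨FreeAlgebra.lift k ![matX k q, matY k], fun _ _ h => by
    cases h <;> ext i j <;> fin_cases i <;> fin_cases j <;>
      simp [matX, matY, Matrix.mul_apply, Fin.sum_univ_four]⟩

theorem leftRegular_x : leftRegular k q (x k q) = matX k q := by
  simp [leftRegular, x]

theorem leftRegular_y : leftRegular k q (y k q) = matY k := by
  simp [leftRegular, y]

theorem linearIndependent_basisWords : LinearIndependent k (basisWords k q) := by
  rw [Fintype.linearIndependent_iff]
  intro c hc i
  have h := congrArg (fun a => leftRegular k q a i 0) hc
  fin_cases i <;>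
    simpa [Fin.sum_univ_four, basisWords, leftRegular_x, leftRegular_y, matX, matY,
      Matrix.mul_apply] using h

noncomputable def basis : Module.Basis (Fin 4) k (PathologicalAlgebra k q) :=
  .mk (linearIndependent_basisWords k q) (span_basisWords k q).ge

theorem coe_basis : ⇑(basis k q) = basisWords k q :=
  Module.Basis.coe_mk _ _

end PathologicalAlgebra

/-- `A_q` is a 4-dimensional `k`-vector space with basis `{1, y, x, yx}`. -/
theorem pathological_algebra_basis (k : Type) [Field k] (q : k) :
    Module.finrank k (PathologicalAlgebra k q) = 4 ∧
    ∃ b : Module.Basis (Fin 4) k (PathologicalAlgebra k q),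
      b 0 = 1 ∧
      b 1 = RingQuot.mkAlgHom k (PathologicalRel k q) (FreeAlgebra.ι k 1) ∧
      b 2 = RingQuot.mkAlgHom k (PathologicalRel k q) (FreeAlgebra.ι k 0) ∧
      b 3 = RingQuot.mkAlgHom k (PathologicalRel k q) (FreeAlgebra.ι k 1) *
            RingQuot.mkAlgHom k (PathologicalRel k q) (FreeAlgebra.ι k 0) := by
  open PathologicalAlgebra in
  refine ⟨by rw [Module.finrank_eq_card_basis (basis k q), Fintype.card_fin], basis k q,
    ?_, ?_, ?_, ?_⟩ <;> rw [coe_basis] <;> rfl
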